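/- Let S be a recursively enumerable set of nonempty lists of natural numbers, and suppose Set.univ is finitely presented in V(S), i.e., there exists a finite set A with C(↑A) = Set.univ. Then there exists a single computable function g : ℕ × ℕ → Option (Finset ℕ) such that for every maximal element X of V(S) with X ≠ Set.univ, we have Xᶜ ≤ₑ^g X. -/

import Mathlib

/-- A set `X ⊆ ℕ` satisfies the Horn implications encoded by `S`:
a list `n₀ :: t ∈ S` means `(∀ m ∈ t, m ∈ X) → n₀ ∈ X`. -/
def SatisfiesHorn (S : Set (List ℕ)) (X : Set ℕ) : Prop :=
  ∀ n₀ : ℕ, ∀ t : List ℕ, (n₀ :: t) ∈ S → (∀ m ∈ t, m ∈ X) → n₀ ∈ X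

/-- The quasivariety defined by `S`. -/
def QV (S : Set (List ℕ)) : Set (Set ℕ) := {X | SatisfiesHorn S X}

/-- The closure of `Y`: the smallest element of `QV S` containing `Y`. -/
def QVclosure (S : Set (List ℕ)) (Y : Set ℕ) : Set ℕ :=
  ⋂₀ {X | X ∈ QV S ∧ Y ⊆ X}

/-- `A` is enumeration reducible to `B` via `f`. -/
def EnumRedVia (A B : Set ℕ) (f : ℕ × ℕ → Option (Finset ℕ)) : Prop :=
  Computable f ∧
    ∀ x : ℕ, x ∈ A ↔ ∃ n : ℕ, ∃ F : Finset ℕ, f (x, n) = some F ∧ ↑F ⊆ B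

/-- `A` is enumeration reducible to `B`. -/
def EnumRed (A B : Set ℕ) : Prop := ∃ f : ℕ × ℕ → Option (Finset ℕ), EnumRedVia A B f

/-- `X` is a maximal element of the quasivariety `QV S`. -/
def QVMaximal (S : Set (List ℕ)) (X : Set ℕ) : Prop :=
  X ∈ QV S ∧ ∀ Z ∈ QV S, X ⊆ Z → Z = X ∨ Z = Set.univ

/-!
If `X` is maximal and `x ∉ X`, the closure of `insert x X` is everything, so it contains the
finite presentation `A` of `Set.univ`; by compactness of Horn derivations, `A` is then derived
from `x` and a finite `F ⊆ X` by finitely many rules of `S`. Conversely, such a derivation with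
`x ∈ X` would put `A`, hence `Set.univ`, inside `X`. So `x ∉ X` exactly when some finite
`F ⊆ X` carries a derivation certificate. Approximating the r.e. set `S` by a primitive recursive
relation makes certificates decidable, and enumerating all of them gives one `g` for every `X`.
-/

open Encodable Denumerable

section Computability

variable {α β γ : Type*}

theorem REPred.exists_primrecRel_monotone [Primcodable α] {p : α → Prop} (hp : REPred p) :
    ∃ R : α → ℕ → Prop, PrimrecRel R ∧ (∀ a, Monotone (R a)) ∧ ∀ a, p a ↔ ∃ k, R a k := by
  obtain ⟨c, hc⟩ := Nat.Partrec.Code.exists_code.1 hp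
  have hdom (a : α) : (c.eval (encode a)).Dom ↔ p a := by simp [hc, encodek, Part.assert]
  refine ⟨fun a k => (c.evaln k (encode a)).isSome, ?_, fun a k₁ k₂ hk => ?_, fun a => ?_⟩
  · exact Primrec.eq.comp (Primrec.option_isSome.comp (Nat.Partrec.Code.primrec_evaln.comp
      ((Primrec.snd.pair (Primrec.const c)).pair (Primrec.encode.comp Primrec.fst))))
      (Primrec.const true)
  · simp only [Option.isSome_iff_exists, le_Prop_eq]
    exact fun ⟨v, hv⟩ => ⟨v, Nat.Partrec.Code.evaln_mono hk hv⟩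
  · simp only [← hdom, Part.dom_iff_mem, Nat.Partrec.Code.evaln_complete,
      Option.isSome_iff_exists]
    exact exists_comm

theorem List.exists_forall_of_monotone {P : α → ℕ → Prop} (hP : ∀ a, Monotone (P a))
    {L : List α} (h : ∀ a ∈ L, ∃ k, P a k) : ∃ k, ∀ a ∈ L, P a k := by
  induction L with
  | nil => exact ⟨0, by simp⟩
  | cons a L ih =>
    obtain ⟨k₁, hk₁⟩ := h a List.mem_cons_self
    obtain ⟨k₂, hk₂⟩ := ih fun b hb => h b (List.mem_cons_of_mem a hb)
    refine ⟨max k₁ k₂, List.forall_mem_cons.2 ⟨hP a (le_max_left _ _) hk₁, fun b hb => ?_⟩⟩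
    exact hP b (le_max_right _ _) (hk₂ b hb)

theorem Primrec.list_mem [Primcodable α] [DecidableEq α] :
    PrimrecRel fun (a : α) (l : List α) => a ∈ l :=
  (PrimrecRel.exists_mem_list Primrec.eq).swap.of_eq fun _ _ => by simp [Function.swap]

theorem Primrec.list_subset [Primcodable α] [DecidableEq α] :
    PrimrecRel fun (l₁ l₂ : List α) => l₁ ⊆ l₂ :=
  PrimrecRel.forall_mem_list Primrec.list_mem

variable [Primcodable β] [Primcodable γ]

def witnessEnum (R : α → β × γ → Prop) [DecidableRel R] (p : α × ℕ) : Option β :=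
  (decode p.2).bind fun q => if R p.1 q then some q.1 else none

variable {R : α → β × γ → Prop} [DecidableRel R]

theorem Primrec.witnessEnum [Primcodable α] (hR : PrimrecRel R) : Primrec (witnessEnum R) :=
  Primrec.option_bind (Primrec.decode.comp Primrec.snd)
    (Primrec.ite (hR.comp (Primrec.fst.comp Primrec.fst) Primrec.snd)
      (Primrec.option_some.comp (Primrec.fst.comp Primrec.snd)) (Primrec.const none)).to₂

theorem exists_witnessEnum_eq_some_iff {a : α} {b : β} :
    (∃ n, witnessEnum R (a, n) = some b) ↔ ∃ c, R a (b, c) := by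
  constructor
  · rintro ⟨n, hn⟩
    obtain ⟨⟨b', c⟩, -, hq⟩ := Option.bind_eq_some_iff.1 hn
    by_cases h : R a (b', c)
    · simp only [h, if_true, Option.some.injEq] at hq
      exact ⟨c, hq ▸ h⟩
    · simp [h] at hq
  · rintro ⟨c, h⟩
    exact ⟨encode (b, c), by simp [witnessEnum, h]⟩

end Computability

/-- A left fold, so that it is visibly primitive recursive (see `raiseRev_eq`). -/
def raiseRev (l : List ℕ) : List ℕ :=
  (l.foldl (fun p m => ((m + p.2) :: p.1, m + p.2 + 1)) ([], 0)).1

theorem foldl_raise_fst (l acc : List ℕ) (n : ℕ) :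
    (l.foldl (fun p m => ((m + p.2) :: p.1, m + p.2 + 1)) (acc, n)).1 =
      (raise' l n).reverse ++ acc := by
  induction l generalizing acc n with
  | nil => rfl
  | cons m l ih => simp [ih, raise']

theorem raiseRev_eq (l : List ℕ) : raiseRev l = (raise' l 0).reverse := by
  simp [raiseRev, foldl_raise_fst]

theorem Primrec.raiseRev : Primrec raiseRev := by
  have hsum : Primrec₂ fun (p : List ℕ × ℕ) (m : ℕ) => m + p.2 :=
    Primrec.nat_add.comp Primrec.snd (Primrec.snd.comp Primrec.fst)
  have hstep : Primrec₂ fun (p : List ℕ × ℕ) (m : ℕ) => ((m + p.2) :: p.1, m + p.2 + 1) :=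
    (Primrec.list_cons.comp hsum (Primrec.fst.comp Primrec.fst)).pair (Primrec.succ.comp hsum)
  exact Primrec.fst.comp (Primrec.list_foldl Primrec.id (Primrec.const ([], 0))
    (hstep.comp (Primrec.fst.comp Primrec.snd) (Primrec.snd.comp Primrec.snd)).to₂)

/-- Reads `F` off its code in the `Denumerable` encoding underlying `Primcodable (Finset ℕ)`,
which differs from that of `Finset.encodable`. -/
def finsetElems (F : Finset ℕ) : List ℕ := raiseRev (ofNat (List ℕ) (eqv (Finset ℕ) F))

theorem mem_finsetElems {F : Finset ℕ} {a : ℕ} : a ∈ finsetElems F ↔ a ∈ F := by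
  conv_rhs => rw [← (eqv (Finset ℕ)).symm_apply_apply F]
  simp only [finsetElems, raiseRev_eq, List.mem_reverse]
  generalize eqv (Finset ℕ) F = n
  change _ ↔ a ∈ Finset.map _ (raise'Finset _ 0)
  simp [raise'Finset]
  rfl

theorem Primrec.finsetElems : Primrec finsetElems :=
  Primrec.raiseRev.comp ((Primrec.ofNat (List ℕ)).comp Primrec.encode)

section Closure

variable {S : Set (List ℕ)} {X Y : Set ℕ}

theorem QVclosure_mem_QV : QVclosure S Y ∈ QV S := fun n₀ t hrule ht =>
  Set.mem_sInter.2 fun _ hX => hX.1 n₀ t hrule fun m hm => Set.mem_sInter.1 (ht m hm) _ hX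

theorem subset_QVclosure : Y ⊆ QVclosure S Y := fun _ hy =>
  Set.mem_sInter.2 fun _ hX => hX.2 hy

theorem QVclosure_subset (hX : X ∈ QV S) (hYX : Y ⊆ X) : QVclosure S Y ⊆ X :=
  Set.sInter_subset_of_mem ⟨hX, hYX⟩

theorem QVMaximal.QVclosure_insert_eq_univ (hX : QVMaximal S X) {x : ℕ} (hx : x ∉ X) :
    QVclosure S (insert x X) = Set.univ := by
  have hXsub : X ⊆ QVclosure S (insert x X) :=
    (Set.subset_insert x X).trans subset_QVclosure
  refine (hX.2 _ QVclosure_mem_QV hXsub).resolve_left fun h => hx ?_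
  exact h ▸ subset_QVclosure (Set.mem_insert x X)

end Closure

def hornStep (L : List (List ℕ)) (E : List ℕ) : List ℕ :=
  E ++ L.filterMap fun l => if l.tail ⊆ E then l.head? else none

def hornIter (L : List (List ℕ)) (k : ℕ) (E : List ℕ) : List ℕ := (hornStep L)^[k] E

section Horn

variable {S : Set (List ℕ)} {X Y : Set ℕ} {L L' : List (List ℕ)} {E E' : List ℕ} {k k' : ℕ}

theorem mem_hornStep {m : ℕ} : m ∈ hornStep L E ↔ m ∈ E ∨ ∃ t, m :: t ∈ L ∧ t ⊆ E := by
  simp only [hornStep, List.mem_append, List.mem_filterMap]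
  refine or_congr_right ⟨?_, ?_⟩
  · rintro ⟨_ | ⟨n, t⟩, hl, h⟩ <;> simp only [List.head?, List.tail] at h
    · simp at h
    · by_cases ht : t ⊆ E
      · simp only [ht, if_true, Option.some.injEq] at h
        exact ⟨t, h ▸ hl, ht⟩
      · simp [ht] at h
  · rintro ⟨t, hl, ht⟩
    exact ⟨m :: t, hl, by simp [ht]⟩

theorem subset_hornStep : E ⊆ hornStep L E := List.subset_append_left _ _

theorem hornStep_mono (hL : L ⊆ L') (hE : E ⊆ E') : hornStep L E ⊆ hornStep L' E' := by
  intro m hm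
  rcases mem_hornStep.1 hm with h | ⟨t, hl, ht⟩
  · exact mem_hornStep.2 (Or.inl (hE h))
  · exact mem_hornStep.2 (Or.inr ⟨t, hL hl, List.Subset.trans ht hE⟩)

theorem hornIter_succ : hornIter L (k + 1) E = hornStep L (hornIter L k E) :=
  Function.iterate_succ_apply' _ _ _

theorem hornIter_mono (hk : k ≤ k') (hL : L ⊆ L') (hE : E ⊆ E') :
    hornIter L k E ⊆ hornIter L' k' E' := by
  induction hk with
  | refl =>
    induction k with
    | zero => exact hE
    | succ k ih => simpa only [hornIter_succ] using hornStep_mono hL ih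
  | step _ ih => exact List.Subset.trans ih (by rw [hornIter_succ]; exact subset_hornStep)

theorem hornIter_subset_of_satisfiesHorn (hX : SatisfiesHorn S X) (hL : ∀ l ∈ L, l ∈ S)
    (hE : ∀ m ∈ E, m ∈ X) : ∀ m ∈ hornIter L k E, m ∈ X := by
  induction k with
  | zero => exact hE
  | succ k ih =>
    intro m hm
    rw [hornIter_succ, mem_hornStep] at hm
    rcases hm with h | ⟨t, hl, ht⟩
    · exact ih m h
    · exact hX m t (hL _ hl) fun a ha => ih a (ht ha)

theorem Primrec.hornIter :
    Primrec fun q : List (List ℕ) × ℕ × List ℕ => hornIter q.1 q.2.1 q.2.2 := by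
  have hstep : Primrec₂ hornStep :=
    Primrec.list_append.comp Primrec.snd (Primrec.listFilterMap Primrec.fst
      (Primrec.ite (Primrec.list_subset.comp (Primrec.list_tail.comp Primrec.snd)
        (Primrec.snd.comp Primrec.fst))
        (Primrec.list_head?.comp Primrec.snd) (Primrec.const none)).to₂)
  exact Primrec.nat_iterate (Primrec.fst.comp Primrec.snd) (Primrec.snd.comp Primrec.snd)
    (hstep.comp (Primrec.fst.comp Primrec.fst) Primrec.snd).to₂

def FinitelyDerivable (S : Set (List ℕ)) (Y : Set ℕ) (T : List ℕ) : Prop :=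
  ∃ E L k, (∀ m ∈ E, m ∈ Y) ∧ (∀ l ∈ L, l ∈ S) ∧ T ⊆ hornIter L k E

theorem FinitelyDerivable.append {T₁ T₂ : List ℕ} (h₁ : FinitelyDerivable S Y T₁)
    (h₂ : FinitelyDerivable S Y T₂) : FinitelyDerivable S Y (T₁ ++ T₂) := by
  obtain ⟨E₁, L₁, k₁, hE₁, hL₁, hT₁⟩ := h₁
  obtain ⟨E₂, L₂, k₂, hE₂, hL₂, hT₂⟩ := h₂
  refine ⟨E₁ ++ E₂, L₁ ++ L₂, max k₁ k₂, fun m hm => ?_, fun l hl => ?_, ?_⟩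
  · exact (List.mem_append.1 hm).elim (hE₁ m) (hE₂ m)
  · exact (List.mem_append.1 hl).elim (hL₁ l) (hL₂ l)
  · refine List.append_subset.2 ⟨List.Subset.trans hT₁ ?_, List.Subset.trans hT₂ ?_⟩
    · exact hornIter_mono (le_max_left _ _) (List.subset_append_left _ _)
        (List.subset_append_left _ _)
    · exact hornIter_mono (le_max_right _ _) (List.subset_append_right _ _)
        (List.subset_append_right _ _)

theorem finitelyDerivable_of_forall {T : List ℕ} (h : ∀ a ∈ T, FinitelyDerivable S Y [a]) :
    FinitelyDerivable S Y T := by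
  induction T with
  | nil => exact ⟨[], [], 0, by simp, by simp, List.nil_subset _⟩
  | cons a T ih =>
    exact (h a List.mem_cons_self).append (ih fun b hb => h b (List.mem_cons_of_mem a hb))

theorem setOf_finitelyDerivable_mem_QV : {a | FinitelyDerivable S Y [a]} ∈ QV S := by
  intro n₀ t hrule ht
  obtain ⟨E, L, k, hE, hL, htL⟩ := finitelyDerivable_of_forall ht
  refine ⟨E, (n₀ :: t) :: L, k + 1, hE, List.forall_mem_cons.2 ⟨hrule, hL⟩, ?_⟩
  rw [List.cons_subset, hornIter_succ, mem_hornStep]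
  refine ⟨Or.inr ⟨t, List.mem_cons_self, List.Subset.trans htL ?_⟩, List.nil_subset _⟩
  exact hornIter_mono le_rfl (List.subset_cons_self _ _) (List.Subset.refl _)

theorem finitelyDerivable_of_subset_QVclosure {T : List ℕ}
    (hT : ∀ a ∈ T, a ∈ QVclosure S Y) : FinitelyDerivable S Y T :=
  finitelyDerivable_of_forall fun a ha =>
    QVclosure_subset setOf_finitelyDerivable_mem_QV
      (fun y hy => ⟨[y], [], 0, by simpa, by simp, List.Subset.refl _⟩) (hT a ha)

end Horn

section Certificate

variable {S : Set (List ℕ)} {R : List ℕ → ℕ → Prop} {A : Finset ℕ} {X : Set ℕ} {x : ℕ}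

/-- `(F, L, k)` certifies that `A` is derived from `insert x F` by `k` rounds of the rules `L`,
each of which `R` accepts at stage `k`. -/
def IsDerivationCert (R : List ℕ → ℕ → Prop) (A : Finset ℕ) (x : ℕ)
    (q : Finset ℕ × List (List ℕ) × ℕ) : Prop :=
  (∀ l ∈ q.2.1, R l q.2.2) ∧ A.toList ⊆ hornIter q.2.1 q.2.2 (x :: finsetElems q.1)

theorem primrecRel_isDerivationCert (hR : PrimrecRel R) (A : Finset ℕ) :
    PrimrecRel (IsDerivationCert R A) := by
  have hF : Primrec fun p : ℕ × Finset ℕ × List (List ℕ) × ℕ => p.2.1 :=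
    Primrec.fst.comp Primrec.snd
  have hL : Primrec fun p : ℕ × Finset ℕ × List (List ℕ) × ℕ => p.2.2.1 :=
    Primrec.fst.comp (Primrec.snd.comp Primrec.snd)
  have hk : Primrec fun p : ℕ × Finset ℕ × List (List ℕ) × ℕ => p.2.2.2 :=
    Primrec.snd.comp (Primrec.snd.comp Primrec.snd)
  exact PrimrecPred.and ((PrimrecRel.forall_mem_list hR).comp hL hk)
    (Primrec.list_subset.comp (Primrec.const A.toList) (Primrec.hornIter.comp
      (hL.pair (hk.pair (Primrec.list_cons.comp Primrec.fst (Primrec.finsetElems.comp hF))))))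

theorem notMem_of_isDerivationCert (hX : X ∈ QV S) (hXu : X ≠ Set.univ)
    (hA : QVclosure S ↑A = Set.univ) (hRS : ∀ l k, R l k → l ∈ S) {F : Finset ℕ}
    (hF : ↑F ⊆ X) {c : List (List ℕ) × ℕ} (hc : IsDerivationCert R A x (F, c)) : x ∉ X := by
  intro hx
  have hstart : ∀ m ∈ x :: finsetElems F, m ∈ X := by
    simpa [mem_finsetElems] using ⟨hx, fun m hm => hF hm⟩
  have hAX : ↑A ⊆ X := fun a ha =>
    hornIter_subset_of_satisfiesHorn hX (fun l hl => hRS l _ (hc.1 l hl)) hstart a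
      (hc.2 (Finset.mem_toList.2 ha))
  exact hXu (Set.eq_univ_of_univ_subset (hA ▸ QVclosure_subset hX hAX))

theorem exists_isDerivationCert (hX : QVMaximal S X) (hR : ∀ l, Monotone (R l))
    (hSR : ∀ l ∈ S, ∃ k, R l k) (hx : x ∉ X) :
    ∃ F : Finset ℕ, (∃ c, IsDerivationCert R A x (F, c)) ∧ ↑F ⊆ X := by
  obtain ⟨E, L, k₀, hE, hL, hAE⟩ := finitelyDerivable_of_subset_QVclosure (T := A.toList)
    fun a _ => (hX.QVclosure_insert_eq_univ hx).symm ▸ Set.mem_univ a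
  obtain ⟨k₁, hk₁⟩ := List.exists_forall_of_monotone hR fun l hl => hSR l (hL l hl)
  have hEF : E ⊆ x :: finsetElems (E.toFinset.erase x) := fun m hm => by
    by_cases hmx : m = x <;> simp [hmx, mem_finsetElems, hm]
  refine ⟨E.toFinset.erase x, ⟨(L, max k₀ k₁), fun l hl => hR l (le_max_right _ _) (hk₁ l hl),
    List.Subset.trans hAE (hornIter_mono (le_max_left _ _) (List.Subset.refl _) hEF)⟩, ?_⟩
  intro m hm
  obtain ⟨hmE, hmx⟩ : m ∈ E ∧ m ≠ x := by simpa using hm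
  exact (hE m hmE).resolve_left hmx

end Certificate

theorem uniform_compl_enumRed_of_maximal_general (S : Set (List ℕ))
    (hS : REPred (· ∈ S))
    (A : Finset ℕ) (hA : QVclosure S ↑A = Set.univ) :
    ∃ g : ℕ × ℕ → Option (Finset ℕ), Computable g ∧
      ∀ X : Set ℕ, QVMaximal S X → X ≠ Set.univ → EnumRedVia Xᶜ X g := by
  classical
  obtain ⟨R, hR, hR_mono, hRS⟩ := hS.exists_primrecRel_monotone
  have hg : Computable (witnessEnum (IsDerivationCert R A)) :=
    (Primrec.witnessEnum (primrecRel_isDerivationCert hR A)).to_comp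
  refine ⟨_, hg, fun X hX hXu => ⟨hg, fun x => ?_⟩⟩
  rw [exists_comm]
  simp only [exists_and_right, exists_witnessEnum_eq_some_iff]
  refine ⟨exists_isDerivationCert hX hR_mono fun l hl => (hRS l).1 hl, ?_⟩
  rintro ⟨F, ⟨c, hc⟩, hF⟩
  exact notMem_of_isDerivationCert hX.1 hXu hA (fun l k hk => (hRS l).2 ⟨k, hk⟩) hF hc

/-- Uniform version: if `Set.univ` is finitely presented in `QV S`, one single
computable `g` witnesses `Xᶜ ≤ₑ^g X` for every maximal `X ≠ Set.univ`. -/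
theorem uniform_compl_enumRed_of_maximal (S : Set (List ℕ))
    (hne : ∀ l ∈ S, l ≠ []) (hS : REPred (· ∈ S))
    (A : Finset ℕ) (hA : QVclosure S ↑A = Set.univ) :
    ∃ g : ℕ × ℕ → Option (Finset ℕ), Computable g ∧
      ∀ X : Set ℕ, QVMaximal S X → X ≠ Set.univ → EnumRedVia Xᶜ X g :=
  uniform_compl_enumRed_of_maximal_general S hS A hA
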